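/- (Exact single-coordinate update for the elastic net.) Consider the elastic-net objective F(α) := (1/(2d))‖Aα − b‖₂² + λ·( (η/2)‖α‖₂² + (1−η)‖α‖₁ ) with λ > 0, η ∈ [0,1], and suppose column a_j ≠ 0 or λη > 0. Fix α ∈ ℝⁿ, let ṽ := Aα − b, and define τ := λd(1−η)/(‖a_j‖₂² + ληd) and γ := (α_j‖a_j‖₂² − a_jᵀṽ)/(‖a_j‖₂² + ληd). Then the unique minimizer of x ↦ F(α + e_j(x − α_j)) over x ∈ ℝ (i.e., minimizing F over the j-th coordinate with all other coordinates fixed) is x* = sign(γ)·max(|γ| − τ, 0). -/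

import Mathlib

/-!
STATEMENT 13: exact single-coordinate update for the elastic net.  For
`F(α) := (1/(2d))‖Aα − b‖² + λ((η/2)‖α‖² + (1−η)‖α‖₁)`, the unique minimizer of `F` over
the `j`-th coordinate (all the other coordinates being fixed) is the soft-thresholded
value `x* = sign(γ)·[|γ| − τ]₊` with
`τ := λd(1−η)/(‖aⱼ‖² + ληd)` and `γ := (αⱼ‖aⱼ‖² − aⱼᵀṽ)/(‖aⱼ‖² + ληd)`, `ṽ := Aα − b`.
-/

open Finset

noncomputable section

/-- The elastic-net objective `F(α) = (1/(2d))‖Aα − b‖₂² + λ(η/2 ‖α‖₂² + (1−η)‖α‖₁)`. -/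
def elasticNet {d n : ℕ} (A : Matrix (Fin d) (Fin n) ℝ) (b : Fin d → ℝ)
    (lam eta : ℝ) (α : Fin n → ℝ) : ℝ :=
  1 / (2 * (d : ℝ)) * ∑ k, (∑ i, A k i * α i - b k) ^ 2 +
    lam * (eta / 2 * ∑ i, (α i) ^ 2 + (1 - eta) * ∑ i, |α i|)

/-!
Along the `j`-th coordinate the objective is `(D/d)·(½(y − γ)² + τ|y|) + const` with
`D = ‖aⱼ‖² + ληd > 0`, so it suffices to minimize `½(y − γ)² + τ|y|`. The soft threshold
`s = sign(γ)·[|γ| − τ]₊` does so strictly: `γ − s` is a subgradient of `τ|·|` at `s`, hence the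
function exceeds its value at `s` by at least `½(y − s)²`.
-/

theorem Fintype.sum_apply_update {ι M β : Type*} [Fintype ι] [DecidableEq ι] [AddCommGroup M]
    (g : ι → β → M) (f : ι → β) (j : ι) (y : β) :
    ∑ i, g i (Function.update f j y i) = ∑ i, g i (f i) + (g j y - g j (f j)) := by
  simp_rw [Function.apply_update g, sum_update_of_mem (mem_univ j),
    sum_eq_add_sum_sdiff_singleton_of_mem (mem_univ j) (fun i => g i (f i))]
  abel

/-- The proximal map of `τ|·|`. -/
def softThreshold (τ γ : ℝ) : ℝ := Real.sign γ * max (|γ| - τ) 0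

theorem softThreshold_cases {τ : ℝ} (hτ : 0 ≤ τ) (γ : ℝ) :
    (|γ| ≤ τ ∧ softThreshold τ γ = 0) ∨ (τ < γ ∧ softThreshold τ γ = γ - τ) ∨
      (γ < -τ ∧ softThreshold τ γ = γ + τ) := by
  unfold softThreshold
  rcases le_or_gt |γ| τ with hle | hgt
  · exact Or.inl ⟨hle, by rw [max_eq_right (by linarith), mul_zero]⟩
  rcases lt_trichotomy γ 0 with hneg | rfl | hpos
  · rw [abs_of_neg hneg] at hgt
    refine Or.inr (Or.inr ⟨by linarith, ?_⟩)
    rw [Real.sign_of_neg hneg, abs_of_neg hneg, max_eq_left (by linarith)]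
    ring
  · exact absurd hgt (by simpa using hτ)
  · rw [abs_of_pos hpos] at hgt
    refine Or.inr (Or.inl ⟨hgt, ?_⟩)
    rw [Real.sign_of_pos hpos, abs_of_pos hpos, max_eq_left (by linarith), one_mul]

theorem abs_sub_softThreshold_le {τ : ℝ} (hτ : 0 ≤ τ) (γ : ℝ) :
    |γ - softThreshold τ γ| ≤ τ := by
  rcases softThreshold_cases hτ γ with ⟨h, hs⟩ | ⟨-, hs⟩ | ⟨-, hs⟩ <;> rw [hs]
  · simpa using h
  all_goals simp [abs_of_nonneg hτ]

theorem sub_softThreshold_mul_softThreshold {τ : ℝ} (hτ : 0 ≤ τ) (γ : ℝ) :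
    (γ - softThreshold τ γ) * softThreshold τ γ = τ * |softThreshold τ γ| := by
  rcases softThreshold_cases hτ γ with ⟨-, hs⟩ | ⟨h, hs⟩ | ⟨h, hs⟩ <;> rw [hs]
  · simp
  · rw [abs_of_pos (by linarith)]; ring
  · rw [abs_of_neg (by linarith)]; ring

theorem softThreshold_add_sq_le {τ : ℝ} (hτ : 0 ≤ τ) (γ x : ℝ) :
    (softThreshold τ γ - γ) ^ 2 / 2 + τ * |softThreshold τ γ| + (x - softThreshold τ γ) ^ 2 / 2 ≤
      (x - γ) ^ 2 / 2 + τ * |x| := by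
  set s := softThreshold τ γ
  have hsub : (γ - s) * x ≤ τ * |x| :=
    calc (γ - s) * x ≤ |γ - s| * |x| := by rw [← abs_mul]; exact le_abs_self _
      _ ≤ τ * |x| := mul_le_mul_of_nonneg_right (abs_sub_softThreshold_le hτ γ) (abs_nonneg x)
  nlinarith [sub_softThreshold_mul_softThreshold hτ γ]

theorem softThreshold_lt_of_ne {τ : ℝ} (hτ : 0 ≤ τ) {γ x : ℝ} (hx : x ≠ softThreshold τ γ) :
    (softThreshold τ γ - γ) ^ 2 / 2 + τ * |softThreshold τ γ| < (x - γ) ^ 2 / 2 + τ * |x| := by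
  have := softThreshold_add_sq_le hτ γ x
  have : 0 < (x - softThreshold τ γ) ^ 2 := by positivity [sub_ne_zero.mpr hx]
  linarith

theorem exists_elasticNet_update_eq {d n : ℕ} (A : Matrix (Fin d) (Fin n) ℝ) (b : Fin d → ℝ)
    (lam eta : ℝ) (j : Fin n) (α : Fin n → ℝ) :
    ∃ C, ∀ y, elasticNet A b lam eta (Function.update α j y) =
      ((∑ k, A k j ^ 2) / (2 * d) + lam * eta / 2) * y ^ 2 -
        (α j * ∑ k, A k j ^ 2 - ∑ k, A k j * (∑ i, A k i * α i - b k)) / d * y +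
          lam * (1 - eta) * |y| + C := by
  set r : Fin d → ℝ := fun k => ∑ i, A k i * α i - b k
  have hres : ∀ y k, ∑ i, A k i * Function.update α j y i - b k = r k + A k j * (y - α j) := by
    intro y k
    rw [Fintype.sum_apply_update (fun i x => A k i * x)]
    ring
  have hsq : ∀ t, ∑ k, (r k + A k j * t) ^ 2 =
      ∑ k, r k ^ 2 + 2 * t * ∑ k, A k j * r k + t ^ 2 * ∑ k, A k j ^ 2 := by
    intro t
    simp only [mul_sum, ← sum_add_distrib]
    exact sum_congr rfl fun k _ => by ring
  refine ⟨(∑ k, r k ^ 2 - 2 * α j * ∑ k, A k j * r k + α j ^ 2 * ∑ k, A k j ^ 2) / (2 * d) +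
    lam * eta / 2 * (∑ i, α i ^ 2 - α j ^ 2) + lam * (1 - eta) * (∑ i, |α i| - |α j|),
    fun y => ?_⟩
  unfold elasticNet
  rw [Fintype.sum_apply_update (fun _ x => x ^ 2), Fintype.sum_apply_update (fun _ x => |x|)]
  simp only [hres, hsq]
  ring

theorem stmt_13
    {d n : ℕ} (hd : 0 < d)
    (A : Matrix (Fin d) (Fin n) ℝ) (b : Fin d → ℝ)
    (lam eta : ℝ) (hlam : 0 < lam) (heta : eta ∈ Set.Icc (0 : ℝ) 1)
    (j : Fin n)
    -- `aⱼ ≠ 0` or `λη > 0` (so that the one-dimensional problem is strictly convex)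
    (hj : (∃ k, A k j ≠ 0) ∨ 0 < lam * eta)
    (α : Fin n → ℝ)
    -- `τ` and `γ` (with `ṽ := Aα − b`)
    (τ γ : ℝ)
    (hτ : τ = lam * (d : ℝ) * (1 - eta) / ((∑ k, (A k j) ^ 2) + lam * eta * (d : ℝ)))
    (hγ : γ = (α j * (∑ k, (A k j) ^ 2) -
          ∑ k, A k j * (∑ i, A k i * α i - b k)) /
        ((∑ k, (A k j) ^ 2) + lam * eta * (d : ℝ)))
    (xstar : ℝ) (hx : xstar = Real.sign γ * max (|γ| - τ) 0) :
    ∀ x : ℝ, x ≠ xstar →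
      elasticNet A b lam eta (Function.update α j xstar) <
        elasticNet A b lam eta (Function.update α j x) := by
  obtain ⟨heta₀, heta₁⟩ := heta
  have hd' : (0 : ℝ) < d := Nat.cast_pos.mpr hd
  set D := (∑ k, (A k j) ^ 2) + lam * eta * (d : ℝ)
  have hD : 0 < D := by
    rcases hj with ⟨k, hk⟩ | hlam_eta
    · have : 0 < ∑ k, A k j ^ 2 := sum_pos' (fun k _ => sq_nonneg _) ⟨k, mem_univ k, by positivity⟩
      positivity
    · positivity
  have hτ₀ : 0 ≤ τ := by
    have : 0 ≤ 1 - eta := by linarith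
    rw [hτ]
    positivity
  obtain ⟨C, hC⟩ := exists_elasticNet_update_eq A b lam eta j α
  have hprox : ∀ y, elasticNet A b lam eta (Function.update α j y) =
      D / d * ((y - γ) ^ 2 / 2 + τ * |y|) + (C - D / d * γ ^ 2 / 2) := by
    intro y
    rw [hC, hτ, hγ]
    field_simp
    ring
  subst hx
  intro x hne
  rw [hprox, hprox]
  exact add_lt_add_left
    (mul_lt_mul_of_pos_left (softThreshold_lt_of_ne (γ := γ) hτ₀ hne) (by positivity)) _

end
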